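/- arXiv:2303.01997 — 2 statements merged into one kernel-verified Lean document; each statement's English description precedes it below -/
import Mathlib

section
/- If H is a connected dominating graph, then e(H)/(v(H)-1) ≥ e(H')/(v(H')-1) for every subgraph H' of H with at least one edge. -/
open MeasureTheory
open scoped Classical

noncomputable section

/-- A graphon: a symmetric measurable function `[0,1]² → [0,1]` (extended to `ℝ²`). -/
structure Graphon where
  toFun : ℝ → ℝ → ℝ
  symm : ∀ x y, toFun x y = toFun y x
  measurable' : Measurable (Function.uncurry toFun)
  nonneg : ∀ x y, 0 ≤ toFun x y
  le_one : ∀ x y, toFun x y ≤ 1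

/-- The number of edges of a finite simple graph. -/
def SimpleGraph.edgeCard {V : Type} [Fintype V] (H : SimpleGraph V) : ℕ :=
  H.edgeSet.toFinset.card

/-- The homomorphism density `t_H(W)` of a graph `H` in a graphon `W`. -/
def homDensity {V : Type} [Fintype V] (H : SimpleGraph V) (W : Graphon) : ℝ :=
  ∫ x in (Set.univ.pi fun _ : V => Set.Icc (0:ℝ) 1),
    ∏ e ∈ H.edgeSet.toFinset,
      Sym2.lift ⟨fun i j => W.toFun (x i) (x j), fun i j => W.symm (x i) (x j)⟩ e

/-- The homomorphism density of an edge subset `J` (of a graph on vertex set `V`). -/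
def subDensity {V : Type} [Fintype V] (J : Finset (Sym2 V)) (W : Graphon) : ℝ :=
  ∫ x in (Set.univ.pi fun _ : V => Set.Icc (0:ℝ) 1),
    ∏ e ∈ J,
      Sym2.lift ⟨fun i j => W.toFun (x i) (x j), fun i j => W.symm (x i) (x j)⟩ e

/-- `H` dominates `H'`: `t_H(W)^{1/e(H)} ≥ t_{H'}(W)^{1/e(H')}` for every graphon `W`. -/
def Dominates {V V' : Type} [Fintype V] [Fintype V']
    (H : SimpleGraph V) (H' : SimpleGraph V') : Prop :=
  ∀ W : Graphon,
    homDensity H' W ^ ((1 : ℝ) / H'.edgeCard) ≤ homDensity H W ^ ((1 : ℝ) / H.edgeCard)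

/-- `H'` is (isomorphic to) a subgraph of `H`. -/
def IsSubgraphOf {V V' : Type} (H' : SimpleGraph V') (H : SimpleGraph V) : Prop :=
  ∃ f : H' →g H, Function.Injective f

/-- `H` is dominating: it dominates all of its subgraphs with at least one edge. -/
def IsDominating {V : Type} [Fintype V] (H : SimpleGraph V) : Prop :=
  ∀ (V' : Type) [Fintype V'] (H' : SimpleGraph V'),
    IsSubgraphOf H' H → 1 ≤ H'.edgeCard → Dominates H H'

/-- The disjoint union of `r` copies of `H`. -/
def nCopies {V : Type} (H : SimpleGraph V) (r : ℕ) : SimpleGraph (V × Fin r) where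
  Adj a b := a.2 = b.2 ∧ H.Adj a.1 b.1
  symm := ⟨fun a b h => ⟨h.1.symm, h.2.symm⟩⟩
  loopless := ⟨fun a h => H.loopless.irrefl a.1 h.2⟩

/-- The disjoint union of two graphs. -/
def disjUnion {V₁ V₂ : Type} (H₁ : SimpleGraph V₁) (H₂ : SimpleGraph V₂) :
    SimpleGraph (V₁ ⊕ V₂) where
  Adj a b := match a, b with
    | .inl a, .inl b => H₁.Adj a b
    | .inr a, .inr b => H₂.Adj a b
    | _, _ => False
  symm := ⟨by rintro (a|a) (b|b) h <;> simp_all <;> exact h.symm⟩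
  loopless := ⟨by rintro (a|a) h <;> exact (SimpleGraph.irrefl _) h⟩

/-- A cut involution of `H`: an involutive automorphism whose fixed set is a vertex
cut separating `L` and `R`, which are swapped by the involution, with no edges
between `L` and `R`. -/
structure CutInvolution {V : Type} (H : SimpleGraph V) where
  toEquiv : V ≃ V
  adj_iff : ∀ v w, H.Adj (toEquiv v) (toEquiv w) ↔ H.Adj v w
  invol : ∀ v, toEquiv (toEquiv v) = v
  L : Set V
  R : Set V
  disj : Disjoint L R
  cover : ∀ v, toEquiv v ≠ v → v ∈ L ∨ v ∈ R
  not_fixed : ∀ v ∈ L ∪ R, toEquiv v ≠ v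
  maps : ∀ v ∈ L, toEquiv v ∈ R
  no_edge : ∀ v ∈ L, ∀ w ∈ R, ¬ H.Adj v w
  L_nonempty : L.Nonempty
  R_nonempty : R.Nonempty

/-- The left-folding map `φ⁺` of a cut involution. -/
def CutInvolution.plusMap {V : Type} {H : SimpleGraph V} (c : CutInvolution H) : V → V :=
  fun v => if v ∈ c.R then c.toEquiv v else v

/-- The right-folding map `φ⁻` of a cut involution. -/
def CutInvolution.minusMap {V : Type} {H : SimpleGraph V} (c : CutInvolution H) : V → V :=
  fun v => if v ∈ c.L then c.toEquiv v else v

/-- `J(ψ) = {e ∈ E(H) : ψ(e) ∈ J}` for a (half-folding) map `ψ` on vertices. -/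
def foldSet {V : Type} [Fintype V] (H : SimpleGraph V) (J : Finset (Sym2 V)) (ψ : V → V) :
    Finset (Sym2 V) :=
  H.edgeSet.toFinset.filter (fun e => Sym2.map ψ e ∈ J)

/-- The number of homomorphisms from `H` to `G`. -/
def homCount {V U : Type} [Fintype V] [Fintype U]
    (H : SimpleGraph V) (G : SimpleGraph U) : ℕ :=
  Nat.card (H →g G)

/-- The homomorphism density `t_H(G)` for finite graphs. -/
def homDensityG {V U : Type} [Fintype V] [Fintype U]
    (H : SimpleGraph V) (G : SimpleGraph U) : ℝ :=
  (homCount H G : ℝ) / (Fintype.card U : ℝ) ^ (Fintype.card V)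

/-- The tensor (categorical) product of two graphs. -/
def tensorProd {V U : Type} (H : SimpleGraph V) (K : SimpleGraph U) :
    SimpleGraph (V × U) where
  Adj a b := H.Adj a.1 b.1 ∧ K.Adj a.2 b.2
  symm := ⟨fun a b h => ⟨h.1.symm, h.2.symm⟩⟩
  loopless := ⟨fun a h => H.loopless.irrefl a.1 h.1⟩

/-- The auxiliary graph `G*` on ordered `m`-tuples of vertices of `G`, with `a ~ a'`
iff every coordinate of `a` is adjacent in `G` to every coordinate of `a'`. -/
def auxPower {U : Type} (G : SimpleGraph U) (m : ℕ) (hm : 1 ≤ m) :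
    SimpleGraph (Fin m → U) where
  Adj a b := ∀ i j, G.Adj (a i) (b j)
  symm := ⟨fun a b h i j => (h j i).symm⟩
  loopless := ⟨fun a h => G.loopless.irrefl (a ⟨0, hm⟩) (h ⟨0, hm⟩ ⟨0, hm⟩)⟩

/-- The graph `C₆⁺`: a 6-cycle on vertices `0,…,5` together with a central vertex `6`
joined to the alternating vertices `0, 2, 4`. -/
def C6plus : SimpleGraph (Fin 7) := SimpleGraph.fromRel (fun a b =>
  (a.1 < 6 ∧ b.1 < 6 ∧ b.1 % 6 = (a.1 + 1) % 6) ∨ (a = 6 ∧ (b = 0 ∨ b = 2 ∨ b = 4)))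

end

/-! Test domination against the graphon `W` that is `1` when `x` and `y` lie in the same half of
`[0,1]` and `0` otherwise. Expanding the integral over the `2^{v(H)}` boxes of the cube, `t_H(W)`
is `2^{-v(H)}` times the number of `2`-colourings of `V(H)` that are constant along edges. A
connected `H` has only the two constant ones, so `t_H(W) = 2^{1-v(H)}`, while any `H'` with a
vertex has at least those two, so `t_{H'}(W) ≥ 2^{1-v(H')}`. Domination then reads
`2^{(1-v(H'))/e(H')} ≤ 2^{(1-v(H))/e(H)}`, which rearranges to the claim. -/

lemma SimpleGraph.Reachable.eq_of_forall_adj {V α : Type*} {G : SimpleGraph V} {f : V → α}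
    (hf : ∀ u v, G.Adj u v → f u = f v) {u v : V} (h : G.Reachable u v) : f u = f v := by
  obtain ⟨p⟩ := h
  induction p with
  | nil => rfl
  | cons hadj _ ih => exact (hf _ _ hadj).trans ih

noncomputable section

namespace Graphon

def half (t : ℝ) : Bool := decide (t < 1 / 2)

lemma half_preimage_true : half ⁻¹' {true} = Set.Iio (1 / 2) := by
  ext; simp [half]

lemma half_preimage_false : half ⁻¹' {false} = Set.Ici (1 / 2) := by
  ext; simp [half]

lemma measurable_half : Measurable half := by
  refine measurable_to_countable' fun b => ?_
  cases b
  · exact half_preimage_false ▸ measurableSet_Ici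
  · exact half_preimage_true ▸ measurableSet_Iio

def twoBlock : Graphon where
  toFun x y := if half x = half y then 1 else 0
  symm x y := by simp only [eq_comm]
  measurable' := Measurable.ite
    (measurableSet_eq_fun (measurable_half.comp measurable_fst)
      (measurable_half.comp measurable_snd))
    measurable_const measurable_const
  nonneg x y := by split <;> norm_num
  le_one x y := by split <;> norm_num

def halfIndicator (b : Bool) : ℝ → ℝ := (half ⁻¹' {b}).indicator 1

lemma integrable_halfIndicator (b : Bool) :
    Integrable (halfIndicator b) (volume.restrict (Set.Icc 0 1)) :=
  (integrable_const 1).indicator (measurable_half (measurableSet_singleton b))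

lemma setIntegral_Icc_halfIndicator (b : Bool) :
    ∫ t in Set.Icc (0 : ℝ) 1, halfIndicator b t = 1 / 2 := by
  rw [halfIndicator, setIntegral_indicator (measurable_half (measurableSet_singleton b)),
    Pi.one_def, setIntegral_const, smul_eq_mul, mul_one]
  cases b
  · have : Set.Icc (0 : ℝ) 1 ∩ Set.Ici (1 / 2) = Set.Icc (1 / 2) 1 := by
      ext t; simp only [Set.mem_inter_iff, Set.mem_Icc, Set.mem_Ici]; grind
    rw [half_preimage_false, this, Real.volume_real_Icc_of_le (by norm_num)]
    norm_num
  · have : Set.Icc (0 : ℝ) 1 ∩ Set.Iio (1 / 2) = Set.Ico 0 (1 / 2) := by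
      ext t; simp only [Set.mem_inter_iff, Set.mem_Icc, Set.mem_Iio, Set.mem_Ico]; grind
    rw [half_preimage_true, this, Real.volume_real_Ico_of_le (by norm_num)]
    norm_num

end Graphon

open Graphon

variable {V : Type} [Fintype V]

def SimpleGraph.edgeConstColorings (H : SimpleGraph V) : Finset (V → Bool) :=
  Finset.univ.filter fun κ => ∀ u v, H.Adj u v → κ u = κ v

lemma const_image_subset_edgeConstColorings (H : SimpleGraph V) :
    Finset.univ.image (Function.const V) ⊆ H.edgeConstColorings := by
  simp [Finset.subset_iff, SimpleGraph.edgeConstColorings]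

lemma card_const_image [Nonempty V] :
    (Finset.univ.image (Function.const V : Bool → V → Bool)).card = 2 := by
  rw [Finset.card_image_of_injective _ Function.const_injective, Finset.card_univ,
    Fintype.card_bool]

lemma two_le_card_edgeConstColorings [Nonempty V] (H : SimpleGraph V) :
    2 ≤ H.edgeConstColorings.card :=
  card_const_image (V := V) ▸ Finset.card_le_card (const_image_subset_edgeConstColorings H)

lemma SimpleGraph.Connected.edgeConstColorings_eq {H : SimpleGraph V} (hH : H.Connected) :
    H.edgeConstColorings = Finset.univ.image (Function.const V) := by
  refine subset_antisymm (fun κ hκ => ?_) (const_image_subset_edgeConstColorings H)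
  obtain ⟨v₀⟩ := hH.nonempty
  have hκ : ∀ u v, H.Adj u v → κ u = κ v := (Finset.mem_filter.mp hκ).2
  exact Finset.mem_image.mpr
    ⟨κ v₀, Finset.mem_univ _, funext fun v => (hH.preconnected v₀ v).eq_of_forall_adj hκ⟩

/-- Of the terms on the right only the colouring `v ↦ half (x v)` can be nonzero. -/
lemma prod_twoBlock_eq_sum (H : SimpleGraph V) (x : V → ℝ) :
    ∏ e ∈ H.edgeSet.toFinset,
        Sym2.lift ⟨fun i j => twoBlock.toFun (x i) (x j),
          fun i j => twoBlock.symm (x i) (x j)⟩ e =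
      ∑ κ ∈ H.edgeConstColorings, ∏ v, halfIndicator (κ v) (x v) := by
  have hbox : ∀ κ : V → Bool, ∏ v, halfIndicator (κ v) (x v) =
      if (fun v => half (x v)) = κ then 1 else 0 := by
    intro κ
    simp only [halfIndicator, Set.indicator_apply, Set.mem_preimage, Set.mem_singleton_iff,
      Pi.one_apply, Finset.prod_boole, Finset.mem_univ, true_implies, funext_iff]
  have hedge : ∀ e ∈ H.edgeSet.toFinset, Sym2.lift ⟨fun i j => twoBlock.toFun (x i) (x j),
      fun i j => twoBlock.symm (x i) (x j)⟩ e =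
        if (Sym2.map (fun v => half (x v)) e).IsDiag then 1 else 0 := by
    intro e _
    induction e using Sym2.ind with
    | _ i j => simp [twoBlock]
  simp_rw [Finset.prod_congr rfl hedge, hbox, Finset.prod_boole, Finset.sum_ite_eq,
    SimpleGraph.edgeConstColorings]
  congr 1
  simp [Sym2.forall]

lemma homDensity_twoBlock (H : SimpleGraph V) :
    homDensity H twoBlock = H.edgeConstColorings.card / 2 ^ Fintype.card V := by
  have hcube : volume.restrict (Set.univ.pi fun _ : V => Set.Icc (0 : ℝ) 1) =
      Measure.pi fun _ => volume.restrict (Set.Icc 0 1) := by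
    rw [volume_pi, Measure.restrict_pi_pi]
  simp_rw [homDensity, prod_twoBlock_eq_sum, hcube]
  rw [integral_finsetSum _ fun κ _ => Integrable.fintype_prod fun v => integrable_halfIndicator _]
  simp_rw [integral_fintype_prod_eq_prod, setIntegral_Icc_halfIndicator, Finset.prod_const,
    Finset.sum_const, Finset.card_univ, nsmul_eq_mul, one_div, inv_pow, div_eq_mul_inv]

lemma SimpleGraph.Connected.homDensity_twoBlock {H : SimpleGraph V} (hH : H.Connected) :
    homDensity H twoBlock = 2 ^ (1 - (Fintype.card V : ℝ)) := by
  have := hH.nonempty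
  rw [_root_.homDensity_twoBlock, hH.edgeConstColorings_eq, card_const_image,
    Real.rpow_sub two_pos, Real.rpow_one, Real.rpow_natCast, Nat.cast_ofNat]

lemma two_rpow_le_homDensity_twoBlock [Nonempty V] (H : SimpleGraph V) :
    2 ^ (1 - (Fintype.card V : ℝ)) ≤ homDensity H twoBlock := by
  rw [homDensity_twoBlock, Real.rpow_sub two_pos, Real.rpow_one, Real.rpow_natCast]
  gcongr
  exact_mod_cast two_le_card_edgeConstColorings H

lemma SimpleGraph.one_le_edgeCard_iff (H : SimpleGraph V) :
    1 ≤ H.edgeCard ↔ ∃ u v, H.Adj u v := by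
  rw [SimpleGraph.edgeCard, Finset.one_le_card, Set.toFinset_nonempty,
    SimpleGraph.edgeSet_nonempty, SimpleGraph.ne_bot_iff_exists_adj]

end

lemma div_le_div_of_two_rpow_le {e e' v v' : ℝ} (he : 0 < e) (hv : 1 < v)
    (h : (2 ^ (1 - v')) ^ (1 / e') ≤ ((2 : ℝ) ^ (1 - v)) ^ (1 / e)) :
    e' / (v' - 1) ≤ e / (v - 1) := by
  rw [← Real.rpow_mul zero_le_two, ← Real.rpow_mul zero_le_two,
    Real.rpow_le_rpow_left_iff one_lt_two] at h
  have hexp : (v - 1) / e ≤ (v' - 1) / e' := by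
    linarith [show (1 - v') * (1 / e') = -((v' - 1) / e') by ring,
      show (1 - v) * (1 / e) = -((v - 1) / e) by ring]
  simpa only [one_div_div] using one_div_le_one_div_of_le (div_pos (by linarith) he) hexp

theorem stmt3 {V : Type} [Fintype V] (H : SimpleGraph V)
    (hH : H.Connected) (hdom : IsDominating H)
    {V' : Type} [Fintype V'] (H' : SimpleGraph V')
    (hsub : IsSubgraphOf H' H) (hE : 1 ≤ H'.edgeCard) :
    (H'.edgeCard : ℝ) / ((Fintype.card V' : ℝ) - 1) ≤
      (H.edgeCard : ℝ) / ((Fintype.card V : ℝ) - 1) := by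
  have hdomW := hdom V' H' hsub hE Graphon.twoBlock
  obtain ⟨u, v, huv⟩ := H'.one_le_edgeCard_iff.mp hE
  obtain ⟨f, -⟩ := hsub
  have : Nonempty V' := ⟨u⟩
  have hV : 1 < (Fintype.card V : ℝ) := by
    exact_mod_cast Fintype.one_lt_card_iff.mpr ⟨f u, f v, (f.map_adj huv).ne⟩
  have he : 0 < (H.edgeCard : ℝ) := by
    exact_mod_cast H.one_le_edgeCard_iff.mpr ⟨f u, f v, f.map_adj huv⟩
  rw [hH.homDensity_twoBlock] at hdomW
  refine div_le_div_of_two_rpow_le he hV (le_trans ?_ hdomW)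
  exact Real.rpow_le_rpow (by positivity) (two_rpow_le_homDensity_twoBlock H') (by positivity)
end

section
/- Let H be a connected dominating bipartite graph whose two sides A and B satisfy |A| = |B|. Then H is regular. -/
open MeasureTheory
open scoped Classical

/-!
Fix a vertex `v` of degree `Δ` and write `a = |A| = |Aᶜ|`, `m = e(H)`. Test the domination of the
star at `v` against the step graphon `W_δ`, equal to `1` exactly when one coordinate is at most `δ`
and the other at least `1/2`. The star has density at least `δ 2^{-Δ}`. A point contributes to
`t_H(W_δ)` only if the coordinates at most `δ` split every edge; by connectivity they then form `A`
or `Aᶜ`, so `t_H(W_δ) ≤ 2 δ^a`. Domination gives `δ^m ≤ C δ^{aΔ}` as `δ → 0`, hence `aΔ ≤ m`. The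
degrees sum to `2m` over `2a` vertices, so all these inequalities are equalities: every vertex has
degree `m / a`.
-/

open Set Filter Topology

theorem le_of_eventually_pow_le_mul_pow {m n : ℕ} {C : ℝ}
    (h : ∀ᶠ δ in 𝓝[>] (0 : ℝ), δ ^ m ≤ C * δ ^ n) : n ≤ m := by
  by_contra! hmn
  have hlim : Tendsto (fun δ : ℝ => C * δ ^ (n - m)) (𝓝[>] 0) (𝓝 0) := by
    have : Tendsto (fun δ : ℝ => C * δ ^ (n - m)) (𝓝 0) (𝓝 (C * 0 ^ (n - m))) :=
      tendsto_const_nhds.mul ((continuous_pow _).tendsto 0)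
    rw [zero_pow (Nat.sub_ne_zero_of_lt hmn), mul_zero] at this
    exact this.mono_left nhdsWithin_le_nhds
  have hone : ∀ᶠ δ in 𝓝[>] (0 : ℝ), 1 ≤ C * δ ^ (n - m) := by
    filter_upwards [h, self_mem_nhdsWithin] with δ hδ (hδpos : 0 < δ)
    have hsplit : δ ^ n = δ ^ m * δ ^ (n - m) := by rw [← pow_add, Nat.add_sub_cancel' hmn.le]
    refine le_of_mul_le_mul_left ?_ (pow_pos hδpos m)
    linarith [hsplit ▸ hδ]
  exact absurd (ge_of_tendsto hlim hone) (by norm_num)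

theorem pow_le_pow_of_rpow_one_div_le {x y : ℝ} {p q : ℕ} (hx : 0 ≤ x) (hy : 0 ≤ y)
    (hp : p ≠ 0) (hq : q ≠ 0) (h : x ^ (1 / p : ℝ) ≤ y ^ (1 / q : ℝ)) : x ^ q ≤ y ^ p := by
  have key := pow_le_pow_left₀ (Real.rpow_nonneg hx _) h (p * q)
  have hpq : (1 / p : ℝ) * ((p * q : ℕ) : ℝ) = q := by push_cast; field_simp
  have hqp : (1 / q : ℝ) * ((p * q : ℕ) : ℝ) = p := by push_cast; field_simp
  rwa [← Real.rpow_natCast, ← Real.rpow_natCast, ← Real.rpow_mul hx, ← Real.rpow_mul hy, hpq, hqp,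
    Real.rpow_natCast, Real.rpow_natCast] at key

namespace Graphon

variable (W : Graphon) {V : Type} (x : V → ℝ)

def edgeVal : Sym2 V → ℝ :=
  Sym2.lift ⟨fun i j => W.toFun (x i) (x j), fun i j => W.symm (x i) (x j)⟩

lemma edgeVal_nonneg (e : Sym2 V) : 0 ≤ W.edgeVal x e :=
  e.ind fun i j => W.nonneg (x i) (x j)

lemma edgeVal_le_one (e : Sym2 V) : W.edgeVal x e ≤ 1 :=
  e.ind fun i j => W.le_one (x i) (x j)

lemma measurable_edgeVal (e : Sym2 V) : Measurable fun x : V → ℝ => W.edgeVal x e :=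
  e.ind fun i j => show Measurable fun x : V → ℝ => Function.uncurry W.toFun (x i, x j) from
    W.measurable'.comp ((measurable_pi_apply i).prodMk (measurable_pi_apply j))

end Graphon

section Density

variable {V : Type} [Fintype V] (H : SimpleGraph V) (W : Graphon)

lemma homDensity_eq_setIntegral :
    homDensity H W = ∫ x in Icc 0 1, ∏ e ∈ H.edgeSet.toFinset, W.edgeVal x e := by
  rw [homDensity, pi_univ_Icc]
  rfl

lemma integrableOn_prod_edgeVal (J : Finset (Sym2 V)) :
    IntegrableOn (fun x : V → ℝ => ∏ e ∈ J, W.edgeVal x e) (Icc 0 1) := by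
  refine Measure.integrableOn_of_bounded (M := 1) measure_Icc_lt_top.ne
    (Finset.measurable_prod _ fun e _ => W.measurable_edgeVal e).aestronglyMeasurable
    (Eventually.of_forall fun x => ?_)
  rw [Real.norm_of_nonneg (Finset.prod_nonneg fun e _ => W.edgeVal_nonneg x e)]
  exact Finset.prod_le_one (fun e _ => W.edgeVal_nonneg x e) fun e _ => W.edgeVal_le_one x e

variable {H W}

lemma measureReal_le_homDensity {R : Set (V → ℝ)} (hR : MeasurableSet R) (hRI : R ⊆ Icc 0 1)
    (h : ∀ x ∈ R, ∀ i j, H.Adj i j → W.toFun (x i) (x j) = 1) :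
    volume.real R ≤ homDensity H W := by
  rw [homDensity_eq_setIntegral]
  calc volume.real R = ∫ x in Icc 0 1, R.indicator 1 x := by
        rw [integral_indicator_one hR, measureReal_restrict_apply hR, inter_eq_left.2 hRI]
    _ ≤ _ := by
      refine setIntegral_mono_on ((integrableOn_const measure_Icc_lt_top.ne).indicator hR)
        (integrableOn_prod_edgeVal W _) measurableSet_Icc fun x _ => ?_
      by_cases hx : x ∈ R
      · rw [indicator_of_mem hx, Pi.one_apply]
        refine (Finset.prod_eq_one fun e he => ?_).ge
        induction e using Sym2.ind with
        | _ i j => exact h x hx i j (by simpa using he)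
      · rw [indicator_of_notMem hx]
        exact Finset.prod_nonneg fun e _ => W.edgeVal_nonneg x e

lemma homDensity_le_measureReal {S : Set (V → ℝ)} (hS : MeasurableSet S) (hSI : S ⊆ Icc 0 1)
    (h : ∀ x ∈ Icc 0 1, (∀ i j, H.Adj i j → W.toFun (x i) (x j) ≠ 0) → x ∈ S) :
    homDensity H W ≤ volume.real S := by
  rw [homDensity_eq_setIntegral]
  calc _ ≤ ∫ x in Icc 0 1, S.indicator 1 x := by
        refine setIntegral_mono_on (integrableOn_prod_edgeVal W _)
          ((integrableOn_const measure_Icc_lt_top.ne).indicator hS) measurableSet_Icc fun x hx => ?_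
        by_cases hxS : x ∈ S
        · rw [indicator_of_mem hxS, Pi.one_apply]
          exact Finset.prod_le_one (fun e _ => W.edgeVal_nonneg x e) fun e _ => W.edgeVal_le_one x e
        · obtain ⟨i, j, hij, hzero⟩ : ∃ i j, H.Adj i j ∧ W.toFun (x i) (x j) = 0 := by
            by_contra! hne
            exact hxS (h x hx hne)
          rw [indicator_of_notMem hxS]
          exact (Finset.prod_eq_zero (i := s(i, j)) (by simpa using hij) hzero).le
    _ = volume.real S := by
        rw [integral_indicator_one hS, measureReal_restrict_apply hS, inter_eq_left.2 hSI]

lemma homDensity_nonneg : 0 ≤ homDensity H W := by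
  rw [homDensity_eq_setIntegral]
  exact setIntegral_nonneg measurableSet_Icc fun x _ =>
    Finset.prod_nonneg fun e _ => W.edgeVal_nonneg x e

end Density

noncomputable def stepGraphon (δ : ℝ) : Graphon where
  toFun x y := if x ≤ δ ∧ 1 / 2 ≤ y ∨ y ≤ δ ∧ 1 / 2 ≤ x then 1 else 0
  symm _ _ := if_congr or_comm rfl rfl
  measurable' := Measurable.ite
    (((measurableSet_le measurable_fst measurable_const).inter
      (measurableSet_le measurable_const measurable_snd)).union
      ((measurableSet_le measurable_snd measurable_const).inter
      (measurableSet_le measurable_const measurable_fst)))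
    measurable_const measurable_const
  nonneg _ _ := by split_ifs <;> norm_num
  le_one _ _ := by split_ifs <;> norm_num

lemma stepGraphon_apply_of_le {δ x y : ℝ} (hx : x ≤ δ) (hy : 1 / 2 ≤ y) :
    (stepGraphon δ).toFun x y = 1 :=
  if_pos (.inl ⟨hx, hy⟩)

lemma le_iff_not_le_of_stepGraphon_ne_zero {δ x y : ℝ} (hδ : δ < 1 / 2)
    (h : (stepGraphon δ).toFun x y ≠ 0) : x ≤ δ ↔ ¬ y ≤ δ := by
  by_contra hxy
  exact h (if_neg (by grind))

namespace SimpleGraph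

variable {V : Type} {H : SimpleGraph V}

lemma Walk.mem_iff_mem_iff {A T : Set V} (hA : ∀ v w, H.Adj v w → (v ∈ A ↔ w ∉ A))
    (hT : ∀ v w, H.Adj v w → (v ∈ T ↔ w ∉ T)) {u w : V} (p : H.Walk u w) :
    (u ∈ A ↔ w ∈ A) ↔ (u ∈ T ↔ w ∈ T) := by
  induction p with
  | nil => tauto
  | cons h _ ih => have := hA _ _ h; have := hT _ _ h; tauto

lemma Preconnected.eq_or_eq_compl {A T : Set V} (hH : H.Preconnected)
    (hA : ∀ v w, H.Adj v w → (v ∈ A ↔ w ∉ A)) (hT : ∀ v w, H.Adj v w → (v ∈ T ↔ w ∉ T)) :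
    T = A ∨ T = Aᶜ := by
  rcases isEmpty_or_nonempty V with hV | ⟨⟨t⟩⟩
  · exact .inl (Subsingleton.elim _ _)
  have hwalk (z : V) := (hH t z).elim (Walk.mem_iff_mem_iff hA hT)
  by_cases ht : t ∈ A ↔ t ∈ T
  · left; ext z; have := hwalk z; tauto
  · right; ext z; have := hwalk z; simp only [mem_compl_iff]; tauto

lemma isSubgraphOf_of_le {G : SimpleGraph V} (h : G ≤ H) : IsSubgraphOf G H :=
  ⟨Hom.ofLE h, Function.injective_id⟩

variable [Fintype V]

lemma edgeCard_fromEdgeSet_incidenceSet (v : V) :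
    (fromEdgeSet (H.incidenceSet v)).edgeCard = H.degree v := by
  rw [edgeCard, ← card_incidenceFinset_eq_degree, incidenceFinset]
  congr 1
  ext e
  simp only [mem_toFinset, edgeSet_fromEdgeSet, Set.mem_sdiff]
  exact ⟨And.left, fun he => ⟨he, H.not_isDiag_of_mem_edgeSet he.1⟩⟩

end SimpleGraph

section StepGraphon

open SimpleGraph

variable {V : Type} [Fintype V] {δ : ℝ}

lemma measureReal_Icc_ite (A : Set V) (hδ0 : 0 ≤ δ) :
    volume.real (Icc 0 fun u => if u ∈ A then δ else 1) = δ ^ Nat.card A := by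
  rw [measureReal_def, Real.volume_Icc_pi_toReal fun u => by dsimp; split_ifs <;> linarith]
  simp [Finset.prod_ite, Nat.card_eq_fintype_card, Fintype.card_subtype]

lemma mul_half_pow_degree_le_homDensity_stepGraphon (H : SimpleGraph V) (v : V)
    (hδ0 : 0 ≤ δ) (hδ1 : δ ≤ 1) :
    δ * (1 / 2) ^ H.degree v ≤ homDensity (fromEdgeSet (H.incidenceSet v)) (stepGraphon δ) := by
  set a : V → ℝ := fun u => if H.Adj v u then 1 / 2 else 0
  set b : V → ℝ := fun u => if u = v then δ else 1
  have hvol : volume.real (Icc a b) = δ * (1 / 2) ^ H.degree v := by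
    have hab : a ≤ b := fun u => by
      by_cases hu : u = v
      · simp [a, b, hu, hδ0]
      · simp only [a, b, hu, if_false]; split_ifs <;> norm_num
    have hfactor (u : V) : b u - a u =
        (if u = v then δ else 1) * (if u ∈ H.neighborFinset v then 1 / 2 else 1) := by
      by_cases hu : u = v
      · simp [a, b, hu]
      · simp only [a, b, hu, mem_neighborFinset, if_false]; split_ifs <;> norm_num
    rw [measureReal_def, Real.volume_Icc_pi_toReal hab, Finset.prod_congr rfl fun u _ => hfactor u,
      Finset.prod_mul_distrib, Finset.prod_ite_eq', Finset.prod_ite_mem, Finset.prod_const,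
      Finset.univ_inter, card_neighborFinset_eq_degree, if_pos (Finset.mem_univ v)]
  rw [← hvol]
  refine measureReal_le_homDensity measurableSet_Icc (Icc_subset_Icc ?_ ?_) fun x hx i j hij => ?_
  · intro u; simp only [a]; split_ifs <;> norm_num
  · intro u; simp only [b, Pi.one_apply]; split_ifs <;> linarith
  · obtain ⟨⟨hij, hv⟩, -⟩ : (H.Adj i j ∧ (v = i ∨ v = j)) ∧ i ≠ j := by
      simpa [mk'_mem_incidenceSet_iff] using hij
    have hxv : x v ≤ δ := by simpa [b] using hx.2 v
    have hxw (w : V) (hw : H.Adj v w) : 1 / 2 ≤ x w := by simpa [a, hw] using hx.1 w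
    rcases hv with rfl | rfl
    · exact stepGraphon_apply_of_le hxv (hxw j hij)
    · rw [Graphon.symm]; exact stepGraphon_apply_of_le hxv (hxw i hij.symm)

lemma homDensity_stepGraphon_le {H : SimpleGraph V} (hH : H.Preconnected) {A : Set V}
    (hA : ∀ v w, H.Adj v w → (v ∈ A ↔ w ∉ A)) (hδ0 : 0 ≤ δ) (hδ : δ < 1 / 2) :
    homDensity H (stepGraphon δ) ≤ δ ^ Nat.card A + δ ^ Nat.card ↥Aᶜ := by
  let box (S : Set V) : Set (V → ℝ) := Icc 0 fun u => if u ∈ S then δ else 1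
  have hbox (S : Set V) : box S ⊆ Icc 0 1 :=
    Icc_subset_Icc le_rfl fun u => by dsimp; split_ifs <;> linarith
  calc homDensity H (stepGraphon δ) ≤ volume.real (box A ∪ box Aᶜ) := by
        refine homDensity_le_measureReal (measurableSet_Icc.union measurableSet_Icc)
          (union_subset (hbox A) (hbox Aᶜ)) fun x hx hne => ?_
        have hT : ∀ v w, H.Adj v w → (v ∈ {u | x u ≤ δ} ↔ w ∉ {u | x u ≤ δ}) := fun v w h =>
          le_iff_not_le_of_stepGraphon_ne_zero hδ (hne v w h)
        have hmem (S : Set V) (hS : {u | x u ≤ δ} = S) : x ∈ box S :=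
          ⟨hx.1, fun u => by dsimp; split_ifs with hu; exacts [hS.ge hu, hx.2 u]⟩
        rcases hH.eq_or_eq_compl hA hT with hS | hS
        exacts [.inl (hmem A hS), .inr (hmem Aᶜ hS)]
    _ ≤ volume.real (box A) + volume.real (box Aᶜ) := measureReal_union_le _ _
    _ = δ ^ Nat.card A + δ ^ Nat.card ↥Aᶜ := by
        rw [measureReal_Icc_ite A hδ0, measureReal_Icc_ite Aᶜ hδ0]

end StepGraphon

section Regularity

open SimpleGraph

variable {V : Type} [Fintype V] {H : SimpleGraph V} {A : Set V}

theorem card_mul_degree_le_edgeCard (hH : H.Connected) (hdom : IsDominating H)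
    (hA : ∀ v w, H.Adj v w → (v ∈ A ↔ w ∉ A)) (hsize : Nat.card A = Nat.card ↥Aᶜ)
    (v : V) : Nat.card A * H.degree v ≤ H.edgeCard := by
  set Δ := H.degree v
  set m := H.edgeCard
  obtain hΔ | hΔ := Nat.eq_zero_or_pos Δ
  · simp [hΔ]
  have hm : m ≠ 0 := by
    obtain ⟨w, hvw⟩ := (H.degree_pos_iff_exists_adj v).1 hΔ
    exact Finset.card_ne_zero_of_mem (mem_toFinset.2 (show s(v, w) ∈ H.edgeSet from hvw))
  let star := fromEdgeSet (H.incidenceSet v)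
  have hstar : star.edgeCard = Δ := edgeCard_fromEdgeSet_incidenceSet v
  have hdom_star : Dominates H star :=
    hdom V star (isSubgraphOf_of_le ((fromEdgeSet_le H).2 fun e he => incidenceSet_subset H v he.1))
      (hstar ▸ hΔ)
  refine le_of_eventually_pow_le_mul_pow (C := 2 ^ (Δ * m) * 2 ^ Δ) ?_
  filter_upwards [Ioo_mem_nhdsGT (show (0 : ℝ) < 1 / 2 by norm_num)] with δ ⟨hδ0, hδ⟩
  have hcompare := hdom_star (stepGraphon δ)
  rw [hstar] at hcompare
  have hpow := pow_le_pow_of_rpow_one_div_le homDensity_nonneg homDensity_nonneg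
    hΔ.ne' hm hcompare
  have hlow := mul_half_pow_degree_le_homDensity_stepGraphon H v hδ0.le (by linarith)
  have hup := homDensity_stepGraphon_le hH.preconnected hA hδ0.le hδ
  rw [← hsize] at hup
  calc δ ^ m = 2 ^ (Δ * m) * (δ * (1 / 2) ^ Δ) ^ m := by
        rw [mul_pow, ← pow_mul, one_div_pow]; field_simp
    _ ≤ 2 ^ (Δ * m) * homDensity star (stepGraphon δ) ^ m := by gcongr
    _ ≤ 2 ^ (Δ * m) * homDensity H (stepGraphon δ) ^ Δ := by gcongr
    _ ≤ 2 ^ (Δ * m) * (δ ^ Nat.card A + δ ^ Nat.card A) ^ Δ := by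
        gcongr; exact homDensity_nonneg
    _ = 2 ^ (Δ * m) * 2 ^ Δ * δ ^ (Nat.card A * Δ) := by ring

theorem card_mul_degree_eq_edgeCard (hH : H.Connected) (hdom : IsDominating H)
    (hA : ∀ v w, H.Adj v w → (v ∈ A ↔ w ∉ A)) (hsize : Nat.card A = Nat.card ↥Aᶜ) (v : V) :
    Nat.card A * H.degree v = H.edgeCard := by
  have hV : Fintype.card V = 2 * Nat.card A := by
    rw [← Nat.card_eq_fintype_card, ← Set.ncard_add_ncard_compl A,
      ← Nat.card_coe_set_eq, ← Nat.card_coe_set_eq, ← hsize, two_mul]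
  have hsum : ∑ u, Nat.card A * H.degree u = ∑ _u : V, H.edgeCard := by
    rw [← Finset.mul_sum, sum_degrees_eq_twice_card_edges, Finset.sum_const, Finset.card_univ, hV,
      smul_eq_mul, edgeCard, edgeFinset]
    ring
  exact (Finset.sum_eq_sum_iff_of_le fun u _ =>
    card_mul_degree_le_edgeCard hH hdom hA hsize u).1 hsum v (Finset.mem_univ v)

end Regularity

theorem stmt5 {V : Type} [Fintype V] (H : SimpleGraph V)
    (hH : H.Connected) (hdom : IsDominating H)
    (A : Set V)
    (hbip : ∀ v w, H.Adj v w → (v ∈ A ↔ w ∉ A))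
    (hsize : Nat.card A = Nat.card ↥(Aᶜ)) :
    ∃ d : ℕ, H.IsRegularOfDegree d := by
  refine ⟨H.edgeCard / Nat.card A, fun v => ?_⟩
  have hpos : 0 < Nat.card A := by
    by_cases hv : v ∈ A
    · exact Nat.card_pos_iff.2 ⟨⟨⟨v, hv⟩⟩, inferInstance⟩
    · exact hsize ▸ Nat.card_pos_iff.2 ⟨⟨⟨v, hv⟩⟩, inferInstance⟩
  exact Nat.eq_div_of_mul_eq_right hpos.ne' (card_mul_degree_eq_edgeCard hH hdom hbip hsize v)
end
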